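/- Suppose $f^\lambda$ satisfies the variational equation $\lambda (\nabla(f^\lambda - f_0), \nabla h)_{L^2(\nu_X)} + (f^\lambda - f_0, h)_{L^2(\mu_X)} = \lambda (g_0, h)_{L^2(\nu_X)}$ for all $h \in H^1(\nu_X)$, where $g_0 \in L^2(\nu_X)$ and the density ratio $r = d\nu_X/d\mu_X$ satisfies $\sup r \leq \kappa$. Then $\|f^\lambda - f_0\|_{L^2(\mu_X)} \leq \lambda \kappa^{1/2} \|g_0\|_{L^2(\nu_X)}$ and $\lambda \|\nabla(f^\lambda - f_0)\|_{L^2(\nu_X)}^2 \leq \lambda^2 \kappa \|g_0\|_{L^2(\nu_X)}^2$. -/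

import Mathlib

open MeasureTheory
open scoped RealInnerProductSpace

/-- Rates for the Sobolev penalized population minimizer: if `f^λ` satisfies the
variational equation
`λ(∇(f^λ - f₀), ∇h)_{L²(ν)} + (f^λ - f₀, h)_{L²(μ)} = λ(g₀, h)_{L²(ν)}` for all
`h ∈ H¹(ν)`, and the density ratio of `ν` w.r.t. `μ` is bounded by `κ`, then
`‖f^λ - f₀‖_{L²(μ)} ≤ λ √κ ‖g₀‖_{L²(ν)}` and
`λ‖∇(f^λ - f₀)‖²_{L²(ν)} ≤ λ²κ‖g₀‖²_{L²(ν)}`. -/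
theorem stmt10 {Ω : Type*} [MeasurableSpace Ω] (μ ν : Measure Ω)
    [IsProbabilityMeasure μ] [IsProbabilityMeasure ν]
    {d : ℕ} (κ lam : ℝ) (hlam : 0 < lam) (hκ : 0 < κ)
    (hdom : ν ≤ ENNReal.ofReal κ • μ)
    (H1 : Set (Ω → ℝ))
    (grad : (Ω → ℝ) → Ω → EuclideanSpace ℝ (Fin d))
    (flam f0 g0 : Ω → ℝ)
    (hmem : (fun x => flam x - f0 x) ∈ H1)
    (he2 : MemLp (fun x => flam x - f0 x) 2 μ)
    (hg2 : MemLp g0 2 ν)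
    (hgrad2 : Integrable (fun x => ‖grad (fun y => flam y - f0 y) x‖ ^ 2) ν)
    (hvar : ∀ h ∈ H1,
      lam * ∫ x, ⟪grad (fun y => flam y - f0 y) x, grad h x⟫ ∂ν
          + ∫ x, (flam x - f0 x) * h x ∂μ
        = lam * ∫ x, g0 x * h x ∂ν) :
    Real.sqrt (∫ x, (flam x - f0 x) ^ 2 ∂μ)
        ≤ lam * Real.sqrt κ * Real.sqrt (∫ x, (g0 x) ^ 2 ∂ν) ∧
    lam * ∫ x, ‖grad (fun y => flam y - f0 y) x‖ ^ 2 ∂ν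
        ≤ lam ^ 2 * κ * ∫ x, (g0 x) ^ 2 ∂ν := by
  set h : Ω → ℝ := fun x => flam x - f0 x with hh
  set A : ℝ := ∫ x, ‖grad h x‖ ^ 2 ∂ν with hA
  set B : ℝ := ∫ x, (h x) ^ 2 ∂μ with hB
  set G : ℝ := ∫ x, (g0 x) ^ 2 ∂ν with hG
  have hA0 : 0 ≤ A := integral_nonneg fun x => sq_nonneg _
  have hB0 : 0 ≤ B := integral_nonneg fun x => sq_nonneg _
  have hG0 : 0 ≤ G := integral_nonneg fun x => sq_nonneg _
  -- Memℒp of h w.r.t. ν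
  have he2ν : MemLp h 2 ν :=
    (he2.smul_measure ENNReal.ofReal_ne_top).mono_measure hdom
  -- bound ∫ h² dν ≤ κ * B
  have hκν : ∫ x, (h x) ^ 2 ∂ν ≤ κ * B := by
    have h1 : ∫ x, (h x) ^ 2 ∂ν ≤ ∫ x, (h x) ^ 2 ∂(ENNReal.ofReal κ • μ) := by
      refine integral_mono_measure hdom (Filter.Eventually.of_forall fun x => sq_nonneg _) ?_
      exact he2.integrable_sq.smul_measure ENNReal.ofReal_ne_top
    have h2 : ∫ x, (h x) ^ 2 ∂(ENNReal.ofReal κ • μ) = κ * B := by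
      rw [integral_smul_measure, ENNReal.toReal_ofReal hκ.le, smul_eq_mul]
    linarith
  -- Cauchy–Schwarz: ∫ g0 h dν ≤ √G * √(∫ h² dν)
  have hCS : ∫ x, g0 x * h x ∂ν ≤ Real.sqrt G * Real.sqrt (∫ x, (h x) ^ 2 ∂ν) := by
    have hpq : (2 : ℝ).HolderConjugate 2 := ⟨by norm_num, by norm_num, by norm_num⟩
    have h2 : (ENNReal.ofReal (2 : ℝ)) = 2 := by norm_num
    have hcs := integral_mul_norm_le_Lp_mul_Lq (μ := ν) hpq (h2 ▸ hg2) (h2 ▸ he2ν)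
    have hle : ∫ x, g0 x * h x ∂ν ≤ ∫ x, ‖g0 x‖ * ‖h x‖ ∂ν := by
      calc ∫ x, g0 x * h x ∂ν ≤ |∫ x, g0 x * h x ∂ν| := le_abs_self _
        _ ≤ ∫ x, ‖g0 x‖ * ‖h x‖ ∂ν := by
            simpa [Real.norm_eq_abs, abs_mul] using
              norm_integral_le_integral_norm (μ := ν) (f := fun x => g0 x * h x)
    refine hle.trans ?_
    have e1 : ∫ x, ‖g0 x‖ ^ (2 : ℝ) ∂ν = G := by
      simp [hG, Real.rpow_natCast (n := 2), Real.rpow_two, Real.norm_eq_abs, sq_abs]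
    have e2 : ∫ x, ‖h x‖ ^ (2 : ℝ) ∂ν = ∫ x, (h x) ^ 2 ∂ν := by
      simp [Real.rpow_two, Real.norm_eq_abs, sq_abs]
    rw [e1, e2] at hcs
    calc ∫ x, ‖g0 x‖ * ‖h x‖ ∂ν
        ≤ G ^ (1 / (2 : ℝ)) * (∫ x, (h x) ^ 2 ∂ν) ^ (1 / (2 : ℝ)) := hcs
      _ = Real.sqrt G * Real.sqrt (∫ x, (h x) ^ 2 ∂ν) := by
          rw [Real.sqrt_eq_rpow, Real.sqrt_eq_rpow]
  -- combine
  have hkey := hvar h hmem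
  have hinner : ∫ x, ⟪grad h x, grad h x⟫ ∂ν = A := by
    rw [hA]
    congr 1
    ext x
    exact real_inner_self_eq_norm_sq _
  have hsq : ∫ x, (flam x - f0 x) * h x ∂μ = B := by
    rw [hB]
    congr 1
    ext x
    simp [hh, sq]
  rw [hinner, hsq] at hkey
  have hνB : Real.sqrt (∫ x, (h x) ^ 2 ∂ν) ≤ Real.sqrt κ * Real.sqrt B := by
    rw [← Real.sqrt_mul hκ.le]
    exact Real.sqrt_le_sqrt hκν
  set C : ℝ := lam * Real.sqrt κ * Real.sqrt G with hC
  have hC0 : 0 ≤ C := by positivity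
  have hmain : lam * A + B ≤ C * Real.sqrt B := by
    calc lam * A + B = lam * ∫ x, g0 x * h x ∂ν := hkey
      _ ≤ lam * (Real.sqrt G * (Real.sqrt κ * Real.sqrt B)) := by
          refine mul_le_mul_of_nonneg_left ?_ hlam.le
          exact hCS.trans (by
            exact mul_le_mul_of_nonneg_left hνB (Real.sqrt_nonneg _))
      _ = C * Real.sqrt B := by ring
  have hBle : B ≤ C * Real.sqrt B := by nlinarith [mul_nonneg hlam.le hA0]
  have hsB : Real.sqrt B ≤ C := by
    rcases eq_or_lt_of_le (Real.sqrt_nonneg B) with hz | hz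
    · rw [← hz]; exact hC0
    · have : Real.sqrt B * Real.sqrt B ≤ C * Real.sqrt B := by
        rw [Real.mul_self_sqrt hB0]; exact hBle
      exact le_of_mul_le_mul_right this hz
  constructor
  · exact hsB
  · have h1 : lam * A ≤ C * Real.sqrt B := by linarith
    have h2 : C * Real.sqrt B ≤ C * C := mul_le_mul_of_nonneg_left hsB hC0
    have h3 : C * C = lam ^ 2 * κ * G := by
      have hk : Real.sqrt κ * Real.sqrt κ = κ := Real.mul_self_sqrt hκ.le
      have hg : Real.sqrt G * Real.sqrt G = G := Real.mul_self_sqrt hG0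
      calc C * C = lam ^ 2 * (Real.sqrt κ * Real.sqrt κ) * (Real.sqrt G * Real.sqrt G) := by
            rw [hC]; ring
        _ = lam ^ 2 * κ * G := by rw [hk, hg]
    linarith
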